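/- Three scattered agents in the face-to-face (F2F) communication model cannot solve Black Hole Search on static rings of arbitrary size, even when the agents have distinct identifiers: for every F2F algorithm for three scattered agents with distinct identifiers there exist a ring size n > 10, an initial placement of the three agents at distinct nodes, and a position of the black hole on the static oriented ring of size n such that the algorithm fails to solve BHS. -/

import Mathlib

namespace BHS

/-- Direction of a (possible) move on an oriented ring: `cw` is clockwise (right
port), `ccw` is counter-clockwise (left port), `stay` means no move. -/
inductive Dir where
  | stay : Dir
  | ccw  : Dir
  | cw   : Dir
deriving DecidableEq

/-- A dynamic-ring schedule on `n` nodes: the (at most one) missing footprint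
edge at each round (edge `e` joins `v_e` and `v_{e+1}`). -/
abbrev Schedule (n : ℕ) := ℕ → Option (ZMod n)

/-- A *static* ring: no edge is ever missing. -/
def staticSchedule (n : ℕ) : Schedule n := fun _ => none

def applyMove {n : ℕ} (e : Option (ZMod n)) (v : ZMod n) : Dir → ZMod n
  | .stay => v
  | .cw   => if e = some v then v else v + 1
  | .ccw  => if e = some (v - 1) then v else v - 1

/-- Local snapshot of an agent in the face-to-face (F2F) model: presence of the
two incident edges and, for each colocated agent (identified by its visible
identifier, including itself), its memory — colocated agents can communicate
arbitrarily; nodes carry no memory and are anonymous. -/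
structure FObs (k : ℕ) (M : Type) where
  cwPresent : Bool
  ccwPresent : Bool
  agents : Fin k → Option M

/-- An action in the F2F model: a move and an optional termination declaration
(`some d`: the black hole is at clockwise distance `d` from the current node). -/
structure FAction (n : ℕ) where
  move : Dir
  halt : Option (ZMod n)

/-- A deterministic algorithm for `k` agents with distinct visible identifiers in
the F2F model on a ring of known size `n`. -/
structure FAlgorithm (n k : ℕ) where
  M : Type
  init : Fin k → M
  step : Fin k → M → FObs k M → M × FAction n

structure FConfig (n k : ℕ) (M : Type) where
  pos : Fin k → Option (ZMod n)
  mem : Fin k → M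
  halted : Fin k → Option (ZMod n)

variable {n k : ℕ}

def fObserve (A : FAlgorithm n k) (e : Option (ZMod n)) (c : FConfig n k A.M)
    (v : ZMod n) : FObs k A.M where
  cwPresent := decide (e ≠ some v)
  ccwPresent := decide (e ≠ some (v - 1))
  agents := fun j => if c.pos j = some v then some (c.mem j) else none

def fAgentUpdate (A : FAlgorithm n k) (bh : ZMod n) (e : Option (ZMod n))
    (c : FConfig n k A.M) (i : Fin k) :
    Option (ZMod n) × A.M × Option (ZMod n) :=
  match c.pos i with
  | none => (none, c.mem i, c.halted i)
  | some v =>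
    if c.halted i ≠ none then (some v, c.mem i, c.halted i)
    else
      let r := A.step i (c.mem i) (fObserve A e c v)
      match r.2.halt with
      | some d => (some v, r.1, some d)
      | none =>
        let w := applyMove e v r.2.move
        (if w = bh then none else some w, r.1, none)

def fStepConfig (A : FAlgorithm n k) (bh : ZMod n) (e : Option (ZMod n))
    (c : FConfig n k A.M) : FConfig n k A.M where
  pos := fun i => (fAgentUpdate A bh e c i).1
  mem := fun i => (fAgentUpdate A bh e c i).2.1
  halted := fun i => (fAgentUpdate A bh e c i).2.2

def fRun (A : FAlgorithm n k) (bh : ZMod n) (sched : Schedule n)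
    (c0 : FConfig n k A.M) : ℕ → FConfig n k A.M
  | 0 => c0
  | t + 1 => fStepConfig A bh (sched t) (fRun A bh sched c0 t)

def fInitConfig (A : FAlgorithm n k) (start : Fin k → ZMod n) : FConfig n k A.M where
  pos := fun i => some (start i)
  mem := A.init
  halted := fun _ => none

/-- Agent `i` has (survived and) terminated correctly locating the black hole. -/
def fHaltedCorrectly (bh : ZMod n) (c : FConfig n k M) (i : Fin k) : Prop :=
  ∃ v d : ZMod n, c.pos i = some v ∧ c.halted i = some d ∧ v + d = bh


/-! ### Auxiliary development for the impossibility proof -/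

section Infra

lemma BHSint_dvd_small {k : ℤ} (h : (30:ℤ) ∣ k) (h1 : -30 < k) (h2 : k < 30) : k = 0 := by
  obtain ⟨c, rfl⟩ := h; omega

lemma BHScast_ne {a b : ℤ} (ha1 : 0 < a) (ha2 : a < 30) (hb1 : 0 < b) (hb2 : b < 30)
    (hne : a ≠ b) : ((a : ℤ) : ZMod 30) ≠ ((b : ℤ) : ZMod 30) := by
  intro h
  rw [ZMod.intCast_eq_intCast_iff] at h
  have hd : (30:ℤ) ∣ b - a := Int.ModEq.dvd h
  have := BHSint_dvd_small hd (by omega) (by omega)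
  omega

lemma BHScast_ne_zero {a : ℤ} (ha1 : 0 < a) (ha2 : a < 30) :
    ((a : ℤ) : ZMod 30) ≠ 0 := by
  intro h
  rw [ZMod.intCast_zmod_eq_zero_iff_dvd] at h
  have := BHSint_dvd_small (by exact_mod_cast h) (by omega) (by omega)
  omega

lemma BHScast_zero_iff {a : ℤ} (h1 : -30 < a) (h2 : a < 60) :
    (((a : ℤ) : ZMod 30) = 0) ↔ (a = 0 ∨ a = 30) := by
  constructor
  · intro h
    rw [ZMod.intCast_zmod_eq_zero_iff_dvd] at h
    obtain ⟨c, hc⟩ : (30:ℤ) ∣ a := by exact_mod_cast h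
    omega
  · rintro (rfl | rfl)
    · simp
    · rw [ZMod.intCast_zmod_eq_zero_iff_dvd]; norm_num

/-- walks with steps in {-1,0,1} -/
def WSteps (z : ℕ → ℤ) : Prop := ∀ t, z (t+1) = z t - 1 ∨ z (t+1) = z t ∨ z (t+1) = z t + 1

lemma BHSreach_up {z : ℕ → ℤ} (h0 : z 0 = 0) (hs : WSteps z) {k : ℤ} (hk : 0 ≤ k)
    {t : ℕ} (ht : k ≤ z t) : ∃ s ≤ t, z s = k := by
  induction t with
  | zero => exact ⟨0, le_refl _, by omega⟩
  | succ t ih =>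
    by_cases h : k ≤ z t
    · obtain ⟨s, hs1, hs2⟩ := ih h
      exact ⟨s, Nat.le_succ_of_le hs1, hs2⟩
    · have := hs t
      exact ⟨t + 1, le_refl _, by omega⟩

lemma BHSreach_down {z : ℕ → ℤ} (h0 : z 0 = 0) (hs : WSteps z) {k : ℤ} (hk : k ≤ 0)
    {t : ℕ} (ht : z t ≤ k) : ∃ s ≤ t, z s = k := by
  induction t with
  | zero => exact ⟨0, le_refl _, by omega⟩
  | succ t ih =>
    by_cases h : z t ≤ k
    · obtain ⟨s, hs1, hs2⟩ := ih h
      exact ⟨s, Nat.le_succ_of_le hs1, hs2⟩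
    · have := hs t
      exact ⟨t + 1, le_refl _, by omega⟩

/-- agent alive through time `t` when placed at slot `p` with displacement walk `z` -/
def AliveW (p : ℤ) (z : ℕ → ℤ) (t : ℕ) : Prop := ∀ s ≤ t, 0 < p + z s ∧ p + z s < 30

lemma AliveW_mono {p : ℤ} {z : ℕ → ℤ} {t u : ℕ} (h : AliveW p z u) (htu : t ≤ u) :
    AliveW p z t := fun s hs => h s (le_trans hs htu)

end Infra


section Solo

variable (Algo : FAlgorithm 30 3)

/-- integer displacement of a move -/
def dirZ : Dir → ℤ
  | .stay => 0
  | .ccw => -1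
  | .cw => 1

/-- the observation of a lone agent -/
def soloObs (i : Fin 3) (m : Algo.M) : FObs 3 Algo.M :=
  ⟨true, true, fun j => if j = i then some m else none⟩

/-- solo evolution of agent `i`: memory, integer displacement, halt flag -/
def solo (i : Fin 3) : ℕ → Algo.M × ℤ × Option (ZMod 30)
  | 0 => (Algo.init i, 0, none)
  | t + 1 =>
    let s := solo i t
    match s.2.2 with
    | some _ => s
    | none =>
      let r := Algo.step i s.1 (soloObs Algo i s.1)
      match r.2.halt with
      | some d => (r.1, s.2.1, some d)
      | none => (r.1, s.2.1 + dirZ r.2.move, none)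

def memS (i : Fin 3) (t : ℕ) : Algo.M := (solo Algo i t).1
def pox (i : Fin 3) (t : ℕ) : ℤ := (solo Algo i t).2.1
def flagS (i : Fin 3) (t : ℕ) : Option (ZMod 30) := (solo Algo i t).2.2

lemma pox_zero (i : Fin 3) : pox Algo i 0 = 0 := rfl

lemma flagS_zero (i : Fin 3) : flagS Algo i 0 = none := rfl

lemma solo_succ (i : Fin 3) (t : ℕ) :
    solo Algo i (t + 1) =
      match (solo Algo i t).2.2 with
      | some _ => solo Algo i t
      | none =>
        let r := Algo.step i (solo Algo i t).1 (soloObs Algo i (solo Algo i t).1)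
        match r.2.halt with
        | some d => (r.1, (solo Algo i t).2.1, some d)
        | none => (r.1, (solo Algo i t).2.1 + dirZ r.2.move, none) := rfl

lemma pox_steps (i : Fin 3) : WSteps (pox Algo i) := by
  intro t
  show (solo Algo i (t+1)).2.1 = _ ∨ (solo Algo i (t+1)).2.1 = _ ∨ (solo Algo i (t+1)).2.1 = _
  rw [solo_succ]
  rcases hf : (solo Algo i t).2.2 with _ | d
  · dsimp only
    rcases hh : (Algo.step i (solo Algo i t).1 (soloObs Algo i (solo Algo i t).1)).2.halt with _ | d
    · simp only [hh]
      rcases hm : (Algo.step i (solo Algo i t).1 (soloObs Algo i (solo Algo i t).1)).2.move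
      · exact Or.inr (Or.inl (by show pox Algo i t + dirZ Dir.stay = pox Algo i t; simp [dirZ]))
      · exact Or.inl (by show pox Algo i t + dirZ Dir.ccw = pox Algo i t - 1; simp [dirZ]; ring)
      · exact Or.inr (Or.inr (by show pox Algo i t + dirZ Dir.cw = pox Algo i t + 1; simp [dirZ]))
    · simp only [hh]
      exact Or.inr (Or.inl rfl)
  · exact Or.inr (Or.inl rfl)

lemma solo_frozen (i : Fin 3) {t : ℕ} (h : (solo Algo i t).2.2 ≠ none) :
    ∀ u, t ≤ u → solo Algo i u = solo Algo i t := by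
  intro u hu
  induction u with
  | zero =>
    have : t = 0 := Nat.le_zero.mp hu
    simp [this]
  | succ u ih =>
    rcases Nat.lt_or_ge t (u + 1) with hlt | hge
    · have htu : t ≤ u := Nat.lt_succ_iff.mp hlt
      have hu' := ih htu
      rw [solo_succ, hu']
      rcases hf : (solo Algo i t).2.2 with _ | d
      · exact absurd hf h
      · simp
    · have : t = u + 1 := le_antisymm hu hge
      simp [this]

lemma flag_frozen (i : Fin 3) {t u : ℕ} {d : ZMod 30} (h : flagS Algo i t = some d)
    (hu : t ≤ u) : pox Algo i u = pox Algo i t ∧ flagS Algo i u = some d := by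
  have := solo_frozen Algo i (t := t) (by simp [flagS] at h; simp [h]) u hu
  constructor
  · show (solo Algo i u).2.1 = (solo Algo i t).2.1 ; rw [this]
  · show (solo Algo i u).2.2 = some d ; rw [this]; exact h

end Solo


section Sim

variable (Algo : FAlgorithm 30 3) (p : Fin 3 → ℤ)

/-- the actual run we consider: black hole at `0`, static ring of size 30 -/
def runC (t : ℕ) : FConfig 30 3 Algo.M :=
  fRun Algo 0 (staticSchedule 30) (fInitConfig Algo (fun i => ((p i : ℤ) : ZMod 30))) t

lemma runC_succ (t : ℕ) :
    runC Algo p (t + 1) = fStepConfig Algo 0 none (runC Algo p t) := rfl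

/-- invariant tying the real run to the solo trajectories -/
def SimInv (t : ℕ) : Prop :=
  ∀ i : Fin 3,
    (AliveW (p i) (pox Algo i) t →
      (runC Algo p t).pos i = some ((p i + pox Algo i t : ℤ) : ZMod 30) ∧
      (runC Algo p t).mem i = memS Algo i t ∧
      (runC Algo p t).halted i = flagS Algo i t) ∧
    (¬ AliveW (p i) (pox Algo i) t →
      (runC Algo p t).pos i = none ∧ (runC Algo p t).halted i = none)

lemma upd_dead (c : FConfig 30 3 Algo.M) (i : Fin 3) (h : c.pos i = none) :
    fAgentUpdate Algo 0 none c i = (none, c.mem i, c.halted i) := by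
  unfold fAgentUpdate
  rw [h]

lemma upd_halted (c : FConfig 30 3 Algo.M) (i : Fin 3) (v : ZMod 30) (d : ZMod 30)
    (h : c.pos i = some v) (hh : c.halted i = some d) :
    fAgentUpdate Algo 0 none c i = (some v, c.mem i, some d) := by
  unfold fAgentUpdate
  rw [h]
  simp [hh]

lemma upd_active (c : FConfig 30 3 Algo.M) (i : Fin 3) (v : ZMod 30)
    (h : c.pos i = some v) (hh : c.halted i = none) :
    fAgentUpdate Algo 0 none c i =
      (match (Algo.step i (c.mem i) (fObserve Algo none c v)).2.halt with
       | some d => (some v, (Algo.step i (c.mem i) (fObserve Algo none c v)).1, some d)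
       | none =>
         (if applyMove none v (Algo.step i (c.mem i) (fObserve Algo none c v)).2.move = 0
            then none
            else some (applyMove none v (Algo.step i (c.mem i) (fObserve Algo none c v)).2.move),
          (Algo.step i (c.mem i) (fObserve Algo none c v)).1, none)) := by
  unfold fAgentUpdate
  rw [h, hh]
  dsimp only
  rw [if_neg (show ¬ (none : Option (ZMod 30)) ≠ none from fun hcon => hcon rfl)]
  rcases (Algo.step i (c.mem i) (fObserve Algo none c v)).2.halt with _ | d <;> rfl

lemma applyMove_none (v : ZMod 30) (mv : Dir) :
    applyMove none v mv = v + ((dirZ mv : ℤ) : ZMod 30) := by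
  cases mv <;> simp [applyMove, dirZ] <;> ring

lemma aliveW_succ {q : ℤ} {z : ℕ → ℤ} {t : ℕ} :
    AliveW q z (t + 1) ↔ AliveW q z t ∧ (0 < q + z (t+1) ∧ q + z (t+1) < 30) := by
  constructor
  · intro h
    exact ⟨AliveW_mono h (Nat.le_succ t), h (t+1) (le_refl _)⟩
  · rintro ⟨h1, h2⟩ s hs
    rcases Nat.lt_or_ge s (t+1) with hlt | hge
    · exact h1 s (Nat.lt_succ_iff.mp hlt)
    · have : s = t + 1 := le_antisymm hs hge
      subst this; exact h2

lemma sim (hC1 : ∀ i, 0 < p i ∧ p i < 30)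
    (hC2 : ∀ i j, i ≠ j → ∀ t, AliveW (p i) (pox Algo i) t → AliveW (p j) (pox Algo j) t →
       p i + pox Algo i t ≠ p j + pox Algo j t) :
    ∀ t, SimInv Algo p t := by
  intro t
  induction t with
  | zero =>
    intro i
    have halive : AliveW (p i) (pox Algo i) 0 := by
      intro s hs
      have hs0 : s = 0 := Nat.le_zero.mp hs
      subst hs0
      rw [pox_zero]
      simpa using hC1 i
    constructor
    · intro _
      refine ⟨?_, rfl, rfl⟩
      show some ((p i : ℤ) : ZMod 30) = _
      rw [pox_zero, add_zero]
    · intro h; exact absurd halive h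
  | succ t ih =>
    intro i
    by_cases halive : AliveW (p i) (pox Algo i) t
    case neg =>
      -- dead stays dead
      have hdead := (ih i).2 halive
      have hd1 : (runC Algo p (t+1)).pos i = none ∧ (runC Algo p (t+1)).halted i = none := by
        rw [runC_succ]
        show (fAgentUpdate Algo 0 none (runC Algo p t) i).1 = none ∧
          (fAgentUpdate Algo 0 none (runC Algo p t) i).2.2 = none
        rw [upd_dead Algo (runC Algo p t) i hdead.1]
        exact ⟨rfl, hdead.2⟩
      constructor
      · intro h
        exact absurd (AliveW_mono h (Nat.le_succ t)) halive
      · intro _; exact hd1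
    case pos =>
      obtain ⟨hpos, hmem, hflag⟩ := (ih i).1 halive
      have hyb := halive t (le_refl t)
      rcases hfl : flagS Algo i t with _ | d
      · -- active branch
        -- observation equality
        have hobs : fObserve Algo none (runC Algo p t) ((p i + pox Algo i t : ℤ) : ZMod 30)
            = soloObs Algo i (memS Algo i t) := by
          simp only [fObserve, soloObs, FObs.mk.injEq]
          refine ⟨by simp, by simp, funext fun j => ?_⟩
          by_cases hj : j = i
          · subst hj
            rw [hpos, if_pos rfl, if_pos rfl, hmem]
          · have hne : (runC Algo p t).pos j ≠ some ((p i + pox Algo i t : ℤ) : ZMod 30) := by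
              by_cases haj : AliveW (p j) (pox Algo j) t
              · obtain ⟨hposj, _, _⟩ := (ih j).1 haj
                rw [hposj]
                intro hcon
                have hyj := haj t (le_refl t)
                exact BHScast_ne hyj.1 hyj.2 hyb.1 hyb.2
                  (hC2 j i hj t haj halive) (Option.some.inj hcon)
              · rw [((ih j).2 haj).1]; simp
            rw [if_neg hne, if_neg hj]
        -- real step reduction
        have hred := upd_active Algo (runC Algo p t) i _ hpos (by rw [hflag, hfl])
        rw [hmem, hobs] at hred
        -- solo step reduction
        have hsolo : solo Algo i (t+1) =
            (match (Algo.step i (memS Algo i t) (soloObs Algo i (memS Algo i t))).2.halt with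
             | some d => ((Algo.step i (memS Algo i t) (soloObs Algo i (memS Algo i t))).1,
                 (solo Algo i t).2.1, some d)
             | none => ((Algo.step i (memS Algo i t) (soloObs Algo i (memS Algo i t))).1,
                 (solo Algo i t).2.1
                   + dirZ (Algo.step i (memS Algo i t) (soloObs Algo i (memS Algo i t))).2.move,
                 none)) := by
          rw [solo_succ]
          have h0 : (solo Algo i t).2.2 = none := hfl
          rw [h0]
          rfl
        rcases hh : (Algo.step i (memS Algo i t) (soloObs Algo i (memS Algo i t))).2.halt with _ | d
        · -- move branch
          rw [hh] at hred hsolo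
          have hsolo' : solo Algo i (t+1) =
              ((Algo.step i (memS Algo i t) (soloObs Algo i (memS Algo i t))).1,
               (solo Algo i t).2.1
                 + dirZ (Algo.step i (memS Algo i t) (soloObs Algo i (memS Algo i t))).2.move,
               none) := by rw [hsolo]
          have hred' : fAgentUpdate Algo 0 none (runC Algo p t) i =
              (if applyMove none ((p i + pox Algo i t : ℤ) : ZMod 30)
                    (Algo.step i (memS Algo i t) (soloObs Algo i (memS Algo i t))).2.move = 0
                 then none
                 else some (applyMove none ((p i + pox Algo i t : ℤ) : ZMod 30)
                    (Algo.step i (memS Algo i t) (soloObs Algo i (memS Algo i t))).2.move),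
               (Algo.step i (memS Algo i t) (soloObs Algo i (memS Algo i t))).1, none) := by rw [hred]
          have hx : pox Algo i (t+1) = p i + pox Algo i t + dirZ
              (Algo.step i (memS Algo i t) (soloObs Algo i (memS Algo i t))).2.move - p i := by
            show (solo Algo i (t+1)).2.1 = _
            rw [hsolo']
            show (solo Algo i t).2.1 + _ = _
            have hpx : pox Algo i t = (solo Algo i t).2.1 := rfl
            rw [hpx]
            ring
          have hmm : memS Algo i (t+1)
              = (Algo.step i (memS Algo i t) (soloObs Algo i (memS Algo i t))).1 := by
            show (solo Algo i (t+1)).1 = _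
            rw [hsolo']
          have hff : flagS Algo i (t+1) = none := by
            show (solo Algo i (t+1)).2.2 = none
            rw [hsolo']
          -- new integer position
          set y' : ℤ := p i + pox Algo i (t+1) with hy'
          have hyrange : -1 < y' ∧ y' < 31 := by
            have hst := pox_steps Algo i t
            constructor <;> (rw [hy']; rcases hst with h | h | h <;> rw [h] <;> omega)
          have hwv : applyMove none ((p i + pox Algo i t : ℤ) : ZMod 30)
              (Algo.step i (memS Algo i t) (soloObs Algo i (memS Algo i t))).2.move
              = ((y' : ℤ) : ZMod 30) := by
            rw [applyMove_none, hy', hx]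
            push_cast
            ring
          rw [hwv] at hred'
          by_cases hw0 : ((y' : ℤ) : ZMod 30) = 0
          · -- agent dies this round
            have hy30 : y' = 0 ∨ y' = 30 :=
              (BHScast_zero_iff (by omega) (by omega)).mp hw0
            have hnal : ¬ AliveW (p i) (pox Algo i) (t+1) := by
              intro hcon
              have := hcon (t+1) (le_refl _)
              rw [← hy'] at this
              omega
            constructor
            · intro h; exact absurd h hnal
            · intro _
              constructor
              · show (fAgentUpdate Algo 0 none (runC Algo p t) i).1 = none
                rw [hred']
                simp [hw0]
              · show (fAgentUpdate Algo 0 none (runC Algo p t) i).2.2 = none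
                rw [hred']
          · -- agent survives the move
            have hyin : 0 < y' ∧ y' < 30 := by
              rcases hyrange with ⟨h1, h2⟩
              have hne0 : y' ≠ 0 := by
                intro h; apply hw0; rw [h]; simp
              have hne30 : y' ≠ 30 := by
                intro h; apply hw0; rw [h]
                rw [ZMod.intCast_zmod_eq_zero_iff_dvd]; norm_num
              omega
            have hal' : AliveW (p i) (pox Algo i) (t+1) := by
              rw [aliveW_succ]
              exact ⟨halive, by rw [← hy']; exact hyin⟩
            constructor
            · intro _
              refine ⟨?_, ?_, ?_⟩
              · show (fAgentUpdate Algo 0 none (runC Algo p t) i).1 = _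
                rw [hred']
                simp [hw0]
              · show (fAgentUpdate Algo 0 none (runC Algo p t) i).2.1 = _
                rw [hred', hmm]
              · show (fAgentUpdate Algo 0 none (runC Algo p t) i).2.2 = _
                rw [hred', hff]
            · intro h; exact absurd hal' h
        · -- halt branch
          rw [hh] at hred hsolo
          have hsolo' : solo Algo i (t+1) =
              ((Algo.step i (memS Algo i t) (soloObs Algo i (memS Algo i t))).1,
               (solo Algo i t).2.1, some d) := by rw [hsolo]
          have hred' : fAgentUpdate Algo 0 none (runC Algo p t) i =
              (some ((p i + pox Algo i t : ℤ) : ZMod 30),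
               (Algo.step i (memS Algo i t) (soloObs Algo i (memS Algo i t))).1, some d) := by rw [hred]
          have hx : pox Algo i (t+1) = pox Algo i t := by
            show (solo Algo i (t+1)).2.1 = _
            rw [hsolo']
            rfl
          have hal' : AliveW (p i) (pox Algo i) (t+1) := by
            rw [aliveW_succ, hx]
            exact ⟨halive, hyb⟩
          constructor
          · intro _
            refine ⟨?_, ?_, ?_⟩
            · show (fAgentUpdate Algo 0 none (runC Algo p t) i).1 = _
              rw [hred', hx]
            · show (fAgentUpdate Algo 0 none (runC Algo p t) i).2.1 = _
              rw [hred']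
              show _ = (solo Algo i (t+1)).1
              rw [hsolo']
            · show (fAgentUpdate Algo 0 none (runC Algo p t) i).2.2 = _
              rw [hred']
              show some d = (solo Algo i (t+1)).2.2
              rw [hsolo']
          · intro h; exact absurd hal' h
      · -- frozen branch
        have hfr := solo_frozen Algo i (t := t) (by rw [show (solo Algo i t).2.2 = flagS Algo i t from rfl, hfl]; simp) (t+1) (Nat.le_succ t)
        have hx : pox Algo i (t+1) = pox Algo i t := by
          show (solo Algo i (t+1)).2.1 = _
          rw [hfr]
          rfl
        have hal' : AliveW (p i) (pox Algo i) (t+1) := by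
          rw [aliveW_succ, hx]
          exact ⟨halive, hyb⟩
        have hred := upd_halted Algo (runC Algo p t) i _ d hpos (by rw [hflag, hfl])
        constructor
        · intro _
          refine ⟨?_, ?_, ?_⟩
          · show (fAgentUpdate Algo 0 none (runC Algo p t) i).1 = _
            rw [hred, hx]
          · show (fAgentUpdate Algo 0 none (runC Algo p t) i).2.1 = _
            rw [hred, hmem]
            show _ = (solo Algo i (t+1)).1
            rw [hfr]
            rfl
          · show (fAgentUpdate Algo 0 none (runC Algo p t) i).2.2 = _
            rw [hred]
            show some d = (solo Algo i (t+1)).2.2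
            rw [hfr]
            exact hfl.symm
        · intro h; exact absurd hal' h

end Sim


section Placement

variable (x : Fin 3 → ℕ → ℤ) (fl : Fin 3 → ℕ → Option (ZMod 30))

/-- what the simulation needs, plus the winning condition -/
def GoodPlacement (p : Fin 3 → ℤ) : Prop :=
  (∀ i, 0 < p i ∧ p i < 30) ∧ Function.Injective p ∧
  (∀ i j, i ≠ j → ∀ t, AliveW (p i) (x i) t → AliveW (p j) (x j) t →
    p i + x i t ≠ p j + x j t) ∧
  ((∀ i t, AliveW (p i) (x i) t → fl i t = none) ∨
   (∃ i t d, AliveW (p i) (x i) t ∧ fl i t = some d ∧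
      ((p i + x i t : ℤ) : ZMod 30) + d ≠ 0))

/-! basic bounds for a single walk -/

lemma not_reached_up {z : ℕ → ℤ} (h0 : z 0 = 0) (hs : WSteps z) {k : ℤ} (hk : 0 ≤ k)
    {t : ℕ} (h : ∀ s ≤ t, z s ≠ k) : z t < k := by
  by_contra hc
  push_neg at hc
  obtain ⟨s, hs1, hs2⟩ := BHSreach_up h0 hs hk hc
  exact h s hs1 hs2

lemma not_reached_down {z : ℕ → ℤ} (h0 : z 0 = 0) (hs : WSteps z) {k : ℤ} (hk : k ≤ 0)
    {t : ℕ} (h : ∀ s ≤ t, z s ≠ k) : k < z t := by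
  by_contra hc
  push_neg at hc
  obtain ⟨s, hs1, hs2⟩ := BHSreach_down h0 hs hk hc
  exact h s hs1 hs2

/-- data of a right-type walk: minimal time hitting `+2`, never at `-2` before -/
def RData (z : ℕ → ℤ) (t2 : ℕ) : Prop :=
  z t2 = 2 ∧ (∀ s < t2, z s ≠ 2) ∧ (∀ s ≤ t2, z s ≠ -2)

def LData (z : ℕ → ℤ) (t2 : ℕ) : Prop :=
  z t2 = -2 ∧ (∀ s < t2, z s ≠ -2) ∧ (∀ s ≤ t2, z s ≠ 2)

def CData (z : ℕ → ℤ) : Prop := ∀ t, z t ≠ 2 ∧ z t ≠ -2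

lemma type_total (z : ℕ → ℤ) :
    (∃ t2, RData z t2) ∨ (∃ t2, LData z t2) ∨ CData z := by
  classical
  by_cases h2 : ∃ t, z t = 2
  · by_cases hm2 : ∃ t, z t = -2
    · set a := Nat.find h2 with ha
      set b := Nat.find hm2 with hb
      have hza : z a = 2 := Nat.find_spec h2
      have hzb : z b = -2 := Nat.find_spec hm2
      have hab : a ≠ b := by intro h; rw [h, hzb] at hza; omega
      rcases lt_or_gt_of_ne hab with hlt | hgt
      · left
        refine ⟨a, hza, fun s hs => Nat.find_min h2 hs, fun s hs hcon => ?_⟩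
        have : b ≤ s := Nat.find_min' hm2 hcon
        omega
      · right; left
        refine ⟨b, hzb, fun s hs => Nat.find_min hm2 hs, fun s hs hcon => ?_⟩
        have : a ≤ s := Nat.find_min' h2 hcon
        omega
    · left
      push_neg at hm2
      set a := Nat.find h2
      exact ⟨a, Nat.find_spec h2, fun s hs => Nat.find_min h2 hs, fun s _ => hm2 s⟩
  · by_cases hm2 : ∃ t, z t = -2
    · right; left
      push_neg at h2
      set b := Nat.find hm2
      exact ⟨b, Nat.find_spec hm2, fun s hs => Nat.find_min hm2 hs, fun s _ => h2 s⟩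
    · right; right
      push_neg at h2; push_neg at hm2
      exact fun t => ⟨h2 t, hm2 t⟩

lemma R_alive_lt {z : ℕ → ℤ} {t2 : ℕ} (hR : RData z t2) {t : ℕ}
    (h : AliveW 28 z t) : t < t2 := by
  by_contra hc
  push_neg at hc
  have := h t2 hc
  rw [hR.1] at this
  omega

lemma R_bounds {z : ℕ → ℤ} (h0 : z 0 = 0) (hs : WSteps z) {t2 : ℕ} (hR : RData z t2)
    {t : ℕ} (ht : t < t2) : -1 ≤ z t ∧ z t ≤ 1 := by
  constructor
  · have := not_reached_down h0 hs (by omega : (-2:ℤ) ≤ 0)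
      (t := t) (fun s hss => hR.2.2 s (le_trans hss (le_of_lt ht)))
    omega
  · have := not_reached_up h0 hs (by omega : (0:ℤ) ≤ 2)
      (t := t) (fun s hss => hR.2.1 s (lt_of_le_of_lt hss ht))
    omega

lemma L_alive_lt {z : ℕ → ℤ} {t2 : ℕ} (hL : LData z t2) {t : ℕ}
    (h : AliveW 2 z t) : t < t2 := by
  by_contra hc
  push_neg at hc
  have := h t2 hc
  rw [hL.1] at this
  omega

lemma L_bounds {z : ℕ → ℤ} (h0 : z 0 = 0) (hs : WSteps z) {t2 : ℕ} (hL : LData z t2)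
    {t : ℕ} (ht : t < t2) : -1 ≤ z t ∧ z t ≤ 1 := by
  constructor
  · have := not_reached_down h0 hs (by omega : (-2:ℤ) ≤ 0)
      (t := t) (fun s hss => hL.2.1 s (lt_of_le_of_lt hss ht))
    omega
  · have := not_reached_up h0 hs (by omega : (0:ℤ) ≤ 2)
      (t := t) (fun s hss => hL.2.2 s (le_trans hss (le_of_lt ht)))
    omega

lemma C_bounds {z : ℕ → ℤ} (h0 : z 0 = 0) (hs : WSteps z) (hC : CData z)
    (t : ℕ) : -1 ≤ z t ∧ z t ≤ 1 := by
  constructor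
  · have := not_reached_down h0 hs (by omega : (-2:ℤ) ≤ 0)
      (t := t) (fun s _ => (hC s).2)
    omega
  · have := not_reached_up h0 hs (by omega : (0:ℤ) ≤ 2)
      (t := t) (fun s _ => (hC s).1)
    omega

lemma C_alive {z : ℕ → ℤ} (h0 : z 0 = 0) (hs : WSteps z) (hC : CData z)
    {c : ℤ} (hc : 2 ≤ c ∧ c ≤ 28) (t : ℕ) : AliveW c z t := by
  intro s _
  have := C_bounds h0 hs hC s
  omega

end Placement


section Placement2

variable (x : Fin 3 → ℕ → ℤ) (fl : Fin 3 → ℕ → Option (ZMod 30))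

/-- an agent that halts somewhere stays flagged and in place forever -/
def Freeze : Prop :=
  ∀ i t d, fl i t = some d → ∀ u, t ≤ u → x i u = x i t ∧ fl i u = some d

lemma dodge_dead (hfr : Freeze x fl) {i : Fin 3} {q : ℤ} {τ : ℕ}
    (hnal : ¬ AliveW q (x i) τ) {t : ℕ} {d' : ZMod 30}
    (hf : fl i t = some d') (hal : AliveW q (x i) t) : False := by
  simp only [AliveW, not_forall] at hnal
  obtain ⟨s, hsτ, hviol⟩ := hnal
  rcases le_or_gt s t with hst | hst
  · exact hviol (hal s hst)
  · have hx := (hfr i t d' hf s (le_of_lt hst)).1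
    have h2 := hal t (le_refl t)
    rw [hx] at hviol
    exact hviol h2

lemma NH_R (hfr : Freeze x fl) {i : Fin 3} (h0 : x i 0 = 0) (hs : WSteps (x i))
    {t2 : ℕ} (hR : RData (x i) t2) :
    ∀ t, AliveW 28 (x i) t → fl i t = none := by
  intro t h
  rcases hflv : fl i t with _ | d
  · rfl
  · exfalso
    have tlt := R_alive_lt hR h
    have hfz := (hfr i t d hflv t2 (le_of_lt tlt)).1
    have hb := R_bounds h0 hs hR tlt
    rw [hR.1] at hfz
    omega

lemma NH_L (hfr : Freeze x fl) {i : Fin 3} (h0 : x i 0 = 0) (hs : WSteps (x i))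
    {t2 : ℕ} (hL : LData (x i) t2) :
    ∀ t, AliveW 2 (x i) t → fl i t = none := by
  intro t h
  rcases hflv : fl i t with _ | d
  · rfl
  · exfalso
    have tlt := L_alive_lt hL h
    have hfz := (hfr i t d hflv t2 (le_of_lt tlt)).1
    have hb := L_bounds h0 hs hL tlt
    rw [hL.1] at hfz
    omega

/-- assembling a placement from role data -/
lemma assemble (j a b : Fin 3) (hja : j ≠ a) (hjb : j ≠ b) (hab : a ≠ b)
    (hcov : ∀ i : Fin 3, i = j ∨ i = a ∨ i = b)
    (sj sa sb : ℤ)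
    (hsjr : 0 < sj ∧ sj < 30) (hsar : 0 < sa ∧ sa < 30) (hsbr : 0 < sb ∧ sb < 30)
    (hd1 : sj ≠ sa) (hd2 : sj ≠ sb) (hd3 : sa ≠ sb)
    (hJ : ∀ t, AliveW sj (x j) t → ∀ i, x i t = 0)
    (hPair : ∀ t, AliveW sa (x a) t → AliveW sb (x b) t → sa + x a t ≠ sb + x b t)
    (hNJ : ∀ t, AliveW sj (x j) t → fl j t = none)
    (hC3 : ((∀ t, AliveW sa (x a) t → fl a t = none) ∧
            (∀ t, AliveW sb (x b) t → fl b t = none)) ∨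
       (∃ t d, (AliveW sa (x a) t ∧ fl a t = some d ∧
                  ((sa + x a t : ℤ) : ZMod 30) + d ≠ 0) ∨
               (AliveW sb (x b) t ∧ fl b t = some d ∧
                  ((sb + x b t : ℤ) : ZMod 30) + d ≠ 0))) :
    ∃ p, GoodPlacement x fl p := by
  classical
  set p : Fin 3 → ℤ := fun i => if i = j then sj else if i = a then sa else sb with hp
  have vj : p j = sj := by simp [hp]
  have va : p a = sa := by
    have h1 : ¬ (a = j) := fun h => hja h.symm
    simp [hp, h1]
  have vb : p b = sb := by
    have h1 : ¬ (b = j) := fun h => hjb h.symm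
    have h2 : ¬ (b = a) := fun h => hab h.symm
    simp [hp, h1, h2]
  refine ⟨p, ?_, ?_, ?_, ?_⟩
  · intro i
    rcases hcov i with rfl | rfl | rfl
    · rw [vj]; exact hsjr
    · rw [va]; exact hsar
    · rw [vb]; exact hsbr
  · intro i1 i2 h
    rcases hcov i1 with rfl | rfl | rfl <;> rcases hcov i2 with rfl | rfl | rfl
    · rfl
    · exact absurd (vj ▸ va ▸ h) hd1
    · exact absurd (vj ▸ vb ▸ h) hd2
    · exact absurd (vj ▸ va ▸ h).symm hd1
    · rfl
    · exact absurd (va ▸ vb ▸ h) hd3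
    · exact absurd (vj ▸ vb ▸ h).symm hd2
    · exact absurd (va ▸ vb ▸ h).symm hd3
    · rfl
  · intro i1 i2 hne t ha1 ha2
    rcases hcov i1 with rfl | rfl | rfl <;> rcases hcov i2 with rfl | rfl | rfl
    · exact absurd rfl hne
    · rw [vj] at ha1
      rw [vj, va]
      have hz := hJ t ha1
      rw [hz i1, hz i2]
      simpa using hd1
    · rw [vj] at ha1
      rw [vj, vb]
      have hz := hJ t ha1
      rw [hz i1, hz i2]
      simpa using hd2
    · rw [vj] at ha2
      rw [va, vj]
      have hz := hJ t ha2
      rw [hz i1, hz i2]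
      simpa using (show sa ≠ sj from fun h => hd1 h.symm)
    · exact absurd rfl hne
    · rw [va] at ha1
      rw [vb] at ha2
      rw [va, vb]
      exact hPair t ha1 ha2
    · rw [vj] at ha2
      rw [vb, vj]
      have hz := hJ t ha2
      rw [hz i1, hz i2]
      simpa using (show sb ≠ sj from fun h => hd2 h.symm)
    · rw [vb] at ha1
      rw [va] at ha2
      rw [vb, va]
      exact fun h => hPair t ha2 ha1 h.symm
    · exact absurd rfl hne
  · rcases hC3 with ⟨hca, hcb⟩ | ⟨t, d, hca | hcb⟩
    · left
      intro i t hal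
      rcases hcov i with rfl | rfl | rfl
      · rw [vj] at hal; exact hNJ t hal
      · rw [va] at hal; exact hca t hal
      · rw [vb] at hal; exact hcb t hal
    · right
      exact ⟨a, t, d, by rw [va]; exact hca.1, hca.2.1, by rw [va]; exact hca.2.2⟩
    · right
      exact ⟨b, t, d, by rw [vb]; exact hcb.1, hcb.2.1, by rw [vb]; exact hcb.2.2⟩

end Placement2


section Placement3

variable (x : Fin 3 → ℕ → ℤ) (fl : Fin 3 → ℕ → Option (ZMod 30))

lemma cover_swap {j a b : Fin 3} (hcov : ∀ i : Fin 3, i = j ∨ i = a ∨ i = b) :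
    ∀ i : Fin 3, i = j ∨ i = b ∨ i = a := by
  intro i
  rcases hcov i with h | h | h
  · exact Or.inl h
  · exact Or.inr (Or.inr h)
  · exact Or.inr (Or.inl h)

lemma cast_shift (q z : ℤ) (d : ZMod 30) :
    ((q + 1 + z : ℤ) : ZMod 30) + d = (((q + z : ℤ) : ZMod 30) + d) + 1 := by
  push_cast
  ring

lemma no_flag_of_not_ex {i : Fin 3} (h : ¬ ∃ t d, fl i t = some d) :
    ∀ t, fl i t = none := by
  intro t
  rcases hflv : fl i t with _ | d
  · rfl
  · exact absurd ⟨t, d, hflv⟩ h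

/-- the `(R, L)` pair case -/
lemma case_RL (j a b : Fin 3) (hja : j ≠ a) (hjb : j ≠ b) (hab : a ≠ b)
    (hcov : ∀ i : Fin 3, i = j ∨ i = a ∨ i = b)
    (h0a : x a 0 = 0) (hsa : WSteps (x a)) (h0b : x b 0 = 0) (hsb : WSteps (x b))
    (hfr : Freeze x fl)
    (sJ : ℤ) (hsJd : sJ = 29 ∨ sJ = 1)
    (hJ : ∀ t, AliveW sJ (x j) t → ∀ i, x i t = 0)
    (hNJ : ∀ t, AliveW sJ (x j) t → fl j t = none)
    {ta tb : ℕ} (hRa : RData (x a) ta) (hLb : LData (x b) tb) :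
    ∃ p, GoodPlacement x fl p := by
  refine assemble x fl j a b hja hjb hab hcov sJ 28 2
    (by rcases hsJd with h | h <;> rw [h] <;> omega) (by omega) (by omega)
    (by rcases hsJd with h | h <;> rw [h] <;> omega)
    (by rcases hsJd with h | h <;> rw [h] <;> omega) (by omega)
    hJ ?_ hNJ ?_
  · intro t h1 h2
    have t1 := R_alive_lt hRa h1
    have b1 := R_bounds h0a hsa hRa t1
    have t2 := L_alive_lt hLb h2
    have b2 := L_bounds h0b hsb hLb t2
    omega
  · exact Or.inl ⟨NH_R x fl hfr h0a hsa hRa, NH_L x fl hfr h0b hsb hLb⟩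

/-- the `(R, C)` pair case -/
lemma case_RC (j a b : Fin 3) (hja : j ≠ a) (hjb : j ≠ b) (hab : a ≠ b)
    (hcov : ∀ i : Fin 3, i = j ∨ i = a ∨ i = b)
    (h0a : x a 0 = 0) (hsa : WSteps (x a)) (h0b : x b 0 = 0) (hsb : WSteps (x b))
    (hfr : Freeze x fl)
    (sJ : ℤ) (hsJd : sJ = 29 ∨ sJ = 1)
    (hJ : ∀ t, AliveW sJ (x j) t → ∀ i, x i t = 0)
    (hNJ : ∀ t, AliveW sJ (x j) t → fl j t = none)
    {ta : ℕ} (hRa : RData (x a) ta) (hCb : CData (x b)) :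
    ∃ p, GoodPlacement x fl p := by
  classical
  have hPair : ∀ (c : ℤ), 2 ≤ c → c ≤ 8 →
      ∀ t, AliveW 28 (x a) t → AliveW c (x b) t → 28 + x a t ≠ c + x b t := by
    intro c hc1 hc2 t h1 _
    have t1 := R_alive_lt hRa h1
    have b1 := R_bounds h0a hsa hRa t1
    have b2 := C_bounds h0b hsb hCb t
    omega
  by_cases hfb : ∃ t d, fl b t = some d
  · obtain ⟨τ, d, hfd⟩ := hfb
    by_cases hV : ((5 + x b τ : ℤ) : ZMod 30) + d = 0
    · refine assemble x fl j a b hja hjb hab hcov sJ 28 6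
        (by rcases hsJd with h | h <;> rw [h] <;> omega) (by omega) (by omega)
        (by rcases hsJd with h | h <;> rw [h] <;> omega)
        (by rcases hsJd with h | h <;> rw [h] <;> omega) (by omega)
        hJ (hPair 6 (by omega) (by omega)) hNJ ?_
      refine Or.inr ⟨τ, d, Or.inr ⟨C_alive h0b hsb hCb ⟨by omega, by omega⟩ τ, hfd, ?_⟩⟩
      have : ((6 + x b τ : ℤ) : ZMod 30) + d = (((5 + x b τ : ℤ) : ZMod 30) + d) + 1 := by
        have := cast_shift 5 (x b τ) d
        norm_num at this ⊢
        exact this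
      rw [this, hV]
      decide
    · refine assemble x fl j a b hja hjb hab hcov sJ 28 5
        (by rcases hsJd with h | h <;> rw [h] <;> omega) (by omega) (by omega)
        (by rcases hsJd with h | h <;> rw [h] <;> omega)
        (by rcases hsJd with h | h <;> rw [h] <;> omega) (by omega)
        hJ (hPair 5 (by omega) (by omega)) hNJ ?_
      exact Or.inr ⟨τ, d, Or.inr ⟨C_alive h0b hsb hCb ⟨by omega, by omega⟩ τ, hfd, hV⟩⟩
  · refine assemble x fl j a b hja hjb hab hcov sJ 28 5
      (by rcases hsJd with h | h <;> rw [h] <;> omega) (by omega) (by omega)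
      (by rcases hsJd with h | h <;> rw [h] <;> omega)
      (by rcases hsJd with h | h <;> rw [h] <;> omega) (by omega)
      hJ (hPair 5 (by omega) (by omega)) hNJ ?_
    exact Or.inl ⟨NH_R x fl hfr h0a hsa hRa, fun t _ => no_flag_of_not_ex fl hfb t⟩

/-- the `(L, C)` pair case -/
lemma case_LC (j a b : Fin 3) (hja : j ≠ a) (hjb : j ≠ b) (hab : a ≠ b)
    (hcov : ∀ i : Fin 3, i = j ∨ i = a ∨ i = b)
    (h0a : x a 0 = 0) (hsa : WSteps (x a)) (h0b : x b 0 = 0) (hsb : WSteps (x b))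
    (hfr : Freeze x fl)
    (sJ : ℤ) (hsJd : sJ = 29 ∨ sJ = 1)
    (hJ : ∀ t, AliveW sJ (x j) t → ∀ i, x i t = 0)
    (hNJ : ∀ t, AliveW sJ (x j) t → fl j t = none)
    {ta : ℕ} (hLa : LData (x a) ta) (hCb : CData (x b)) :
    ∃ p, GoodPlacement x fl p := by
  classical
  have hPair : ∀ (c : ℤ), 6 ≤ c → c ≤ 8 →
      ∀ t, AliveW 2 (x a) t → AliveW c (x b) t → 2 + x a t ≠ c + x b t := by
    intro c hc1 hc2 t h1 _
    have t1 := L_alive_lt hLa h1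
    have b1 := L_bounds h0a hsa hLa t1
    have b2 := C_bounds h0b hsb hCb t
    omega
  by_cases hfb : ∃ t d, fl b t = some d
  · obtain ⟨τ, d, hfd⟩ := hfb
    by_cases hV : ((6 + x b τ : ℤ) : ZMod 30) + d = 0
    · refine assemble x fl j a b hja hjb hab hcov sJ 2 7
        (by rcases hsJd with h | h <;> rw [h] <;> omega) (by omega) (by omega)
        (by rcases hsJd with h | h <;> rw [h] <;> omega)
        (by rcases hsJd with h | h <;> rw [h] <;> omega) (by omega)
        hJ (hPair 7 (by omega) (by omega)) hNJ ?_
      refine Or.inr ⟨τ, d, Or.inr ⟨C_alive h0b hsb hCb ⟨by omega, by omega⟩ τ, hfd, ?_⟩⟩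
      have : ((7 + x b τ : ℤ) : ZMod 30) + d = (((6 + x b τ : ℤ) : ZMod 30) + d) + 1 := by
        have := cast_shift 6 (x b τ) d
        norm_num at this ⊢
        exact this
      rw [this, hV]
      decide
    · refine assemble x fl j a b hja hjb hab hcov sJ 2 6
        (by rcases hsJd with h | h <;> rw [h] <;> omega) (by omega) (by omega)
        (by rcases hsJd with h | h <;> rw [h] <;> omega)
        (by rcases hsJd with h | h <;> rw [h] <;> omega) (by omega)
        hJ (hPair 6 (by omega) (by omega)) hNJ ?_
      exact Or.inr ⟨τ, d, Or.inr ⟨C_alive h0b hsb hCb ⟨by omega, by omega⟩ τ, hfd, hV⟩⟩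
  · refine assemble x fl j a b hja hjb hab hcov sJ 2 6
      (by rcases hsJd with h | h <;> rw [h] <;> omega) (by omega) (by omega)
      (by rcases hsJd with h | h <;> rw [h] <;> omega)
      (by rcases hsJd with h | h <;> rw [h] <;> omega) (by omega)
      hJ (hPair 6 (by omega) (by omega)) hNJ ?_
    exact Or.inl ⟨NH_L x fl hfr h0a hsa hLa, fun t _ => no_flag_of_not_ex fl hfb t⟩

/-- the `(C, C)` pair case -/
lemma case_CC (j a b : Fin 3) (hja : j ≠ a) (hjb : j ≠ b) (hab : a ≠ b)
    (hcov : ∀ i : Fin 3, i = j ∨ i = a ∨ i = b)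
    (h0a : x a 0 = 0) (hsa : WSteps (x a)) (h0b : x b 0 = 0) (hsb : WSteps (x b))
    (hfr : Freeze x fl)
    (sJ : ℤ) (hsJd : sJ = 29 ∨ sJ = 1)
    (hJ : ∀ t, AliveW sJ (x j) t → ∀ i, x i t = 0)
    (hNJ : ∀ t, AliveW sJ (x j) t → fl j t = none)
    (hCa : CData (x a)) (hCb : CData (x b)) :
    ∃ p, GoodPlacement x fl p := by
  classical
  have hPair : ∀ (ca cb : ℤ), 5 ≤ ca → ca ≤ 6 → 10 ≤ cb → cb ≤ 11 →
      ∀ t, AliveW ca (x a) t → AliveW cb (x b) t → ca + x a t ≠ cb + x b t := by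
    intro ca cb hc1 hc2 hc3 hc4 t _ _
    have b1 := C_bounds h0a hsa hCa t
    have b2 := C_bounds h0b hsb hCb t
    omega
  by_cases hfa : ∃ t d, fl a t = some d
  · obtain ⟨τ, d, hfd⟩ := hfa
    by_cases hV : ((5 + x a τ : ℤ) : ZMod 30) + d = 0
    · refine assemble x fl j a b hja hjb hab hcov sJ 6 10
        (by rcases hsJd with h | h <;> rw [h] <;> omega) (by omega) (by omega)
        (by rcases hsJd with h | h <;> rw [h] <;> omega)
        (by rcases hsJd with h | h <;> rw [h] <;> omega) (by omega)
        hJ (hPair 6 10 (by omega) (by omega) (by omega) (by omega)) hNJ ?_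
      refine Or.inr ⟨τ, d, Or.inl ⟨C_alive h0a hsa hCa ⟨by omega, by omega⟩ τ, hfd, ?_⟩⟩
      have : ((6 + x a τ : ℤ) : ZMod 30) + d = (((5 + x a τ : ℤ) : ZMod 30) + d) + 1 := by
        have := cast_shift 5 (x a τ) d
        norm_num at this ⊢
        exact this
      rw [this, hV]
      decide
    · refine assemble x fl j a b hja hjb hab hcov sJ 5 10
        (by rcases hsJd with h | h <;> rw [h] <;> omega) (by omega) (by omega)
        (by rcases hsJd with h | h <;> rw [h] <;> omega)
        (by rcases hsJd with h | h <;> rw [h] <;> omega) (by omega)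
        hJ (hPair 5 10 (by omega) (by omega) (by omega) (by omega)) hNJ ?_
      exact Or.inr ⟨τ, d, Or.inl ⟨C_alive h0a hsa hCa ⟨by omega, by omega⟩ τ, hfd, hV⟩⟩
  · by_cases hfb : ∃ t d, fl b t = some d
    · obtain ⟨τ, d, hfd⟩ := hfb
      by_cases hV : ((10 + x b τ : ℤ) : ZMod 30) + d = 0
      · refine assemble x fl j a b hja hjb hab hcov sJ 5 11
          (by rcases hsJd with h | h <;> rw [h] <;> omega) (by omega) (by omega)
          (by rcases hsJd with h | h <;> rw [h] <;> omega)
          (by rcases hsJd with h | h <;> rw [h] <;> omega) (by omega)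
          hJ (hPair 5 11 (by omega) (by omega) (by omega) (by omega)) hNJ ?_
        refine Or.inr ⟨τ, d, Or.inr ⟨C_alive h0b hsb hCb ⟨by omega, by omega⟩ τ, hfd, ?_⟩⟩
        have : ((11 + x b τ : ℤ) : ZMod 30) + d = (((10 + x b τ : ℤ) : ZMod 30) + d) + 1 := by
          have := cast_shift 10 (x b τ) d
          norm_num at this ⊢
          exact this
        rw [this, hV]
        decide
      · refine assemble x fl j a b hja hjb hab hcov sJ 5 10
          (by rcases hsJd with h | h <;> rw [h] <;> omega) (by omega) (by omega)
          (by rcases hsJd with h | h <;> rw [h] <;> omega)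
          (by rcases hsJd with h | h <;> rw [h] <;> omega) (by omega)
          hJ (hPair 5 10 (by omega) (by omega) (by omega) (by omega)) hNJ ?_
        exact Or.inr ⟨τ, d, Or.inr ⟨C_alive h0b hsb hCb ⟨by omega, by omega⟩ τ, hfd, hV⟩⟩
    · refine assemble x fl j a b hja hjb hab hcov sJ 5 10
        (by rcases hsJd with h | h <;> rw [h] <;> omega) (by omega) (by omega)
        (by rcases hsJd with h | h <;> rw [h] <;> omega)
        (by rcases hsJd with h | h <;> rw [h] <;> omega) (by omega)
        hJ (hPair 5 10 (by omega) (by omega) (by omega) (by omega)) hNJ ?_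
      exact Or.inl ⟨fun t _ => no_flag_of_not_ex fl hfa t,
        fun t _ => no_flag_of_not_ex fl hfb t⟩

end Placement3


section Placement4

variable (x : Fin 3 → ℕ → ℤ) (fl : Fin 3 → ℕ → Option (ZMod 30))

/-- ordered `(R, R)` pair case: the walk of `a` reaches `+2` no later -/
lemma case_RR' (j a b : Fin 3) (hja : j ≠ a) (hjb : j ≠ b) (hab : a ≠ b)
    (hcov : ∀ i : Fin 3, i = j ∨ i = a ∨ i = b)
    (h0a : x a 0 = 0) (hsa : WSteps (x a)) (h0b : x b 0 = 0) (hsb : WSteps (x b))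
    (hfr : Freeze x fl)
    (sJ : ℤ) (hsJd : sJ = 29 ∨ sJ = 1)
    (hJ : ∀ t, AliveW sJ (x j) t → ∀ i, x i t = 0)
    (hNJ : ∀ t, AliveW sJ (x j) t → fl j t = none)
    {ta tb : ℕ} (hRa : RData (x a) ta) (hRb : RData (x b) tb) (hord : ta ≤ tb) :
    ∃ p, GoodPlacement x fl p := by
  classical
  have hPair : ∀ (q : ℤ), 24 ≤ q → q ≤ 25 →
      ∀ t, AliveW 28 (x a) t → AliveW q (x b) t → 28 + x a t ≠ q + x b t := by
    intro q hq1 hq2 t h1 _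
    have t1 := R_alive_lt hRa h1
    have b1 := R_bounds h0a hsa hRa t1
    have b2 := R_bounds h0b hsb hRb (lt_of_lt_of_le t1 hord)
    omega
  by_cases hQ : ∃ t d, AliveW 25 (x b) t ∧ fl b t = some d
  · obtain ⟨τ, d, halQ, hfd⟩ := hQ
    by_cases hV : ((25 + x b τ : ℤ) : ZMod 30) + d = 0
    · -- dodge to slot 24
      by_cases hal24 : AliveW 24 (x b) τ
      · refine assemble x fl j a b hja hjb hab hcov sJ 28 24
          (by rcases hsJd with h | h <;> rw [h] <;> omega) (by omega) (by omega)
          (by rcases hsJd with h | h <;> rw [h] <;> omega)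
          (by rcases hsJd with h | h <;> rw [h] <;> omega) (by omega)
          hJ (hPair 24 (by omega) (by omega)) hNJ ?_
        refine Or.inr ⟨τ, d, Or.inr ⟨hal24, hfd, ?_⟩⟩
        have hsh : ((25 + x b τ : ℤ) : ZMod 30) + d
            = (((24 + x b τ : ℤ) : ZMod 30) + d) + 1 := by
          have := cast_shift 24 (x b τ) d
          norm_num at this ⊢
          exact this
        intro hcon
        rw [hsh, hcon] at hV
        norm_num at hV
        exact (by decide : ((1 : ZMod 30)) ≠ 0) hV
      · refine assemble x fl j a b hja hjb hab hcov sJ 28 24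
          (by rcases hsJd with h | h <;> rw [h] <;> omega) (by omega) (by omega)
          (by rcases hsJd with h | h <;> rw [h] <;> omega)
          (by rcases hsJd with h | h <;> rw [h] <;> omega) (by omega)
          hJ (hPair 24 (by omega) (by omega)) hNJ ?_
        refine Or.inl ⟨NH_R x fl hfr h0a hsa hRa, fun t hal => ?_⟩
        rcases hflv : fl b t with _ | d'
        · rfl
        · exact absurd (dodge_dead x fl hfr hal24 hflv hal) (by exact fun h => h)
    · refine assemble x fl j a b hja hjb hab hcov sJ 28 25
        (by rcases hsJd with h | h <;> rw [h] <;> omega) (by omega) (by omega)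
        (by rcases hsJd with h | h <;> rw [h] <;> omega)
        (by rcases hsJd with h | h <;> rw [h] <;> omega) (by omega)
        hJ (hPair 25 (by omega) (by omega)) hNJ ?_
      exact Or.inr ⟨τ, d, Or.inr ⟨halQ, hfd, hV⟩⟩
  · refine assemble x fl j a b hja hjb hab hcov sJ 28 25
      (by rcases hsJd with h | h <;> rw [h] <;> omega) (by omega) (by omega)
      (by rcases hsJd with h | h <;> rw [h] <;> omega)
      (by rcases hsJd with h | h <;> rw [h] <;> omega) (by omega)
      hJ (hPair 25 (by omega) (by omega)) hNJ ?_
    refine Or.inl ⟨NH_R x fl hfr h0a hsa hRa, fun t hal => ?_⟩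
    rcases hflv : fl b t with _ | d'
    · rfl
    · exact absurd ⟨t, d', hal, hflv⟩ hQ

lemma case_RR (j a b : Fin 3) (hja : j ≠ a) (hjb : j ≠ b) (hab : a ≠ b)
    (hcov : ∀ i : Fin 3, i = j ∨ i = a ∨ i = b)
    (h0a : x a 0 = 0) (hsa : WSteps (x a)) (h0b : x b 0 = 0) (hsb : WSteps (x b))
    (hfr : Freeze x fl)
    (sJ : ℤ) (hsJd : sJ = 29 ∨ sJ = 1)
    (hJ : ∀ t, AliveW sJ (x j) t → ∀ i, x i t = 0)
    (hNJ : ∀ t, AliveW sJ (x j) t → fl j t = none)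
    {ta tb : ℕ} (hRa : RData (x a) ta) (hRb : RData (x b) tb) :
    ∃ p, GoodPlacement x fl p := by
  rcases le_total ta tb with h | h
  · exact case_RR' x fl j a b hja hjb hab hcov h0a hsa h0b hsb hfr sJ hsJd hJ hNJ hRa hRb h
  · exact case_RR' x fl j b a hjb hja (fun hc => hab hc.symm) (cover_swap hcov)
      h0b hsb h0a hsa hfr sJ hsJd hJ hNJ hRb hRa h

/-- ordered `(L, L)` pair case -/
lemma case_LL' (j a b : Fin 3) (hja : j ≠ a) (hjb : j ≠ b) (hab : a ≠ b)
    (hcov : ∀ i : Fin 3, i = j ∨ i = a ∨ i = b)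
    (h0a : x a 0 = 0) (hsa : WSteps (x a)) (h0b : x b 0 = 0) (hsb : WSteps (x b))
    (hfr : Freeze x fl)
    (sJ : ℤ) (hsJd : sJ = 29 ∨ sJ = 1)
    (hJ : ∀ t, AliveW sJ (x j) t → ∀ i, x i t = 0)
    (hNJ : ∀ t, AliveW sJ (x j) t → fl j t = none)
    {ta tb : ℕ} (hLa : LData (x a) ta) (hLb : LData (x b) tb) (hord : ta ≤ tb) :
    ∃ p, GoodPlacement x fl p := by
  classical
  have hPair : ∀ (q : ℤ), 5 ≤ q → q ≤ 6 →
      ∀ t, AliveW 2 (x a) t → AliveW q (x b) t → 2 + x a t ≠ q + x b t := by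
    intro q hq1 hq2 t h1 _
    have t1 := L_alive_lt hLa h1
    have b1 := L_bounds h0a hsa hLa t1
    have b2 := L_bounds h0b hsb hLb (lt_of_lt_of_le t1 hord)
    omega
  by_cases hQ : ∃ t d, AliveW 5 (x b) t ∧ fl b t = some d
  · obtain ⟨τ, d, halQ, hfd⟩ := hQ
    by_cases hV : ((5 + x b τ : ℤ) : ZMod 30) + d = 0
    · by_cases hal6 : AliveW 6 (x b) τ
      · refine assemble x fl j a b hja hjb hab hcov sJ 2 6
          (by rcases hsJd with h | h <;> rw [h] <;> omega) (by omega) (by omega)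
          (by rcases hsJd with h | h <;> rw [h] <;> omega)
          (by rcases hsJd with h | h <;> rw [h] <;> omega) (by omega)
          hJ (hPair 6 (by omega) (by omega)) hNJ ?_
        refine Or.inr ⟨τ, d, Or.inr ⟨hal6, hfd, ?_⟩⟩
        have hsh : ((6 + x b τ : ℤ) : ZMod 30) + d
            = (((5 + x b τ : ℤ) : ZMod 30) + d) + 1 := by
          have := cast_shift 5 (x b τ) d
          norm_num at this ⊢
          exact this
        rw [hsh, hV]
        decide
      · refine assemble x fl j a b hja hjb hab hcov sJ 2 6
          (by rcases hsJd with h | h <;> rw [h] <;> omega) (by omega) (by omega)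
          (by rcases hsJd with h | h <;> rw [h] <;> omega)
          (by rcases hsJd with h | h <;> rw [h] <;> omega) (by omega)
          hJ (hPair 6 (by omega) (by omega)) hNJ ?_
        refine Or.inl ⟨NH_L x fl hfr h0a hsa hLa, fun t hal => ?_⟩
        rcases hflv : fl b t with _ | d'
        · rfl
        · exact absurd (dodge_dead x fl hfr hal6 hflv hal) (fun h => h)
    · refine assemble x fl j a b hja hjb hab hcov sJ 2 5
        (by rcases hsJd with h | h <;> rw [h] <;> omega) (by omega) (by omega)
        (by rcases hsJd with h | h <;> rw [h] <;> omega)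
        (by rcases hsJd with h | h <;> rw [h] <;> omega) (by omega)
        hJ (hPair 5 (by omega) (by omega)) hNJ ?_
      exact Or.inr ⟨τ, d, Or.inr ⟨halQ, hfd, hV⟩⟩
  · refine assemble x fl j a b hja hjb hab hcov sJ 2 5
      (by rcases hsJd with h | h <;> rw [h] <;> omega) (by omega) (by omega)
      (by rcases hsJd with h | h <;> rw [h] <;> omega)
      (by rcases hsJd with h | h <;> rw [h] <;> omega) (by omega)
      hJ (hPair 5 (by omega) (by omega)) hNJ ?_
    refine Or.inl ⟨NH_L x fl hfr h0a hsa hLa, fun t hal => ?_⟩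
    rcases hflv : fl b t with _ | d'
    · rfl
    · exact absurd ⟨t, d', hal, hflv⟩ hQ

lemma case_LL (j a b : Fin 3) (hja : j ≠ a) (hjb : j ≠ b) (hab : a ≠ b)
    (hcov : ∀ i : Fin 3, i = j ∨ i = a ∨ i = b)
    (h0a : x a 0 = 0) (hsa : WSteps (x a)) (h0b : x b 0 = 0) (hsb : WSteps (x b))
    (hfr : Freeze x fl)
    (sJ : ℤ) (hsJd : sJ = 29 ∨ sJ = 1)
    (hJ : ∀ t, AliveW sJ (x j) t → ∀ i, x i t = 0)
    (hNJ : ∀ t, AliveW sJ (x j) t → fl j t = none)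
    {ta tb : ℕ} (hLa : LData (x a) ta) (hLb : LData (x b) tb) :
    ∃ p, GoodPlacement x fl p := by
  rcases le_total ta tb with h | h
  · exact case_LL' x fl j a b hja hjb hab hcov h0a hsa h0b hsb hfr sJ hsJd hJ hNJ hLa hLb h
  · exact case_LL' x fl j b a hjb hja (fun hc => hab hc.symm) (cover_swap hcov)
      h0b hsb h0a hsa hfr sJ hsJd hJ hNJ hLb hLa h

end Placement4


section PlacementMain

variable (x : Fin 3 → ℕ → ℤ) (fl : Fin 3 → ℕ → Option (ZMod 30))

lemma exists_other : ∀ j : Fin 3, ∃ a b : Fin 3,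
    j ≠ a ∧ j ≠ b ∧ a ≠ b ∧ ∀ i : Fin 3, i = j ∨ i = a ∨ i = b := by decide

lemma placement (hx0 : ∀ i, x i 0 = 0) (hxs : ∀ i, WSteps (x i)) (hfr : Freeze x fl) :
    ∃ p, GoodPlacement x fl p := by
  classical
  by_cases hmov : ∃ n, ∃ i : Fin 3, x i n ≠ 0
  · -- some agent eventually moves
    set fJ := Nat.find hmov with hfJdef
    obtain ⟨j, hj⟩ := Nat.find_spec hmov
    rw [← hfJdef] at hj
    have hall : ∀ i s, s < fJ → x i s = 0 := by
      intro i s hs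
      by_contra hc
      exact Nat.find_min hmov hs ⟨i, hc⟩
    have hfJ0 : fJ ≠ 0 := by
      intro h
      rw [h] at hj
      exact hj (hx0 j)
    have hJv : x j fJ = 1 ∨ x j fJ = -1 := by
      obtain ⟨m, hm⟩ : ∃ m, fJ = m + 1 := ⟨fJ - 1, by omega⟩
      have hprev : x j m = 0 := hall j m (by omega)
      have hstep := hxs j m
      rw [← hm] at hstep
      rw [hprev] at hstep
      have hne0 : x j fJ ≠ 0 := hj
      rcases hstep with h | h | h <;> omega
    set sJ : ℤ := if x j fJ = 1 then 29 else 1 with hsJ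
    have hsJd : sJ = 29 ∨ sJ = 1 := by
      rw [hsJ]
      by_cases h : x j fJ = 1
      · left; rw [if_pos h]
      · right; rw [if_neg h]
    have hexit : sJ + x j fJ = 30 ∨ sJ + x j fJ = 0 := by
      rcases hJv with h | h
      · left; rw [hsJ, if_pos h, h]; norm_num
      · right
        rw [hsJ, if_neg (by rw [h]; omega), h]
        norm_num
    have hJalt : ∀ t, AliveW sJ (x j) t → t < fJ := by
      intro t h
      by_contra hc
      push_neg at hc
      have := h fJ hc
      rcases hexit with he | he <;> omega
    have hJ : ∀ t, AliveW sJ (x j) t → ∀ i, x i t = 0 :=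
      fun t h i => hall i t (hJalt t h)
    have hNJ : ∀ t, AliveW sJ (x j) t → fl j t = none := by
      intro t h
      rcases hflv : fl j t with _ | d
      · rfl
      · exfalso
        have hlt := hJalt t h
        have hfz := (hfr j t d hflv fJ (le_of_lt hlt)).1
        have h0t : x j t = 0 := hall j t hlt
        rw [h0t] at hfz
        rcases hJv with hv | hv <;> omega
    obtain ⟨a, b, hja, hjb, hab, hcov⟩ := exists_other j
    rcases type_total (x a) with ⟨ta, hRa⟩ | ⟨ta, hLa⟩ | hCa
    · rcases type_total (x b) with ⟨tb, hRb⟩ | ⟨tb, hLb⟩ | hCb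
      · exact case_RR x fl j a b hja hjb hab hcov (hx0 a) (hxs a) (hx0 b) (hxs b)
          hfr sJ hsJd hJ hNJ hRa hRb
      · exact case_RL x fl j a b hja hjb hab hcov (hx0 a) (hxs a) (hx0 b) (hxs b)
          hfr sJ hsJd hJ hNJ hRa hLb
      · exact case_RC x fl j a b hja hjb hab hcov (hx0 a) (hxs a) (hx0 b) (hxs b)
          hfr sJ hsJd hJ hNJ hRa hCb
    · rcases type_total (x b) with ⟨tb, hRb⟩ | ⟨tb, hLb⟩ | hCb
      · exact case_RL x fl j b a hjb hja (fun h => hab h.symm) (cover_swap hcov)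
          (hx0 b) (hxs b) (hx0 a) (hxs a) hfr sJ hsJd hJ hNJ hRb hLa
      · exact case_LL x fl j a b hja hjb hab hcov (hx0 a) (hxs a) (hx0 b) (hxs b)
          hfr sJ hsJd hJ hNJ hLa hLb
      · exact case_LC x fl j a b hja hjb hab hcov (hx0 a) (hxs a) (hx0 b) (hxs b)
          hfr sJ hsJd hJ hNJ hLa hCb
    · rcases type_total (x b) with ⟨tb, hRb⟩ | ⟨tb, hLb⟩ | hCb
      · exact case_RC x fl j b a hjb hja (fun h => hab h.symm) (cover_swap hcov)
          (hx0 b) (hxs b) (hx0 a) (hxs a) hfr sJ hsJd hJ hNJ hRb hCa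
      · exact case_LC x fl j b a hjb hja (fun h => hab h.symm) (cover_swap hcov)
          (hx0 b) (hxs b) (hx0 a) (hxs a) hfr sJ hsJd hJ hNJ hLb hCa
      · exact case_CC x fl j a b hja hjb hab hcov (hx0 a) (hxs a) (hx0 b) (hxs b)
          hfr sJ hsJd hJ hNJ hCa hCb
  · -- nobody ever moves
    push_neg at hmov
    have hzero : ∀ i t, x i t = 0 := fun i t => hmov t i
    set base : Fin 3 → ℤ := fun i => 5 + 5 * (i.val : ℤ) with hbase
    have hbb : ∀ i : Fin 3, base i = 5 ∨ base i = 10 ∨ base i = 15 := by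
      intro i
      fin_cases i <;> simp [hbase]
    have hsep : ∀ i1 i2 : Fin 3, i1 ≠ i2 →
        base i1 + 5 ≤ base i2 ∨ base i2 + 5 ≤ base i1 := by
      intro i1 i2 h
      fin_cases i1 <;> fin_cases i2 <;> simp [hbase] <;> omega
    by_cases hfe : ∃ i t d, fl i t = some d
    · obtain ⟨i₀, τ, d, hfd⟩ := hfe
      by_cases hV : ((base i₀ + x i₀ τ : ℤ) : ZMod 30) + d = 0
      · -- shift agent i₀ by one
        refine ⟨fun i => if i = i₀ then base i + 1 else base i, ?_, ?_, ?_, ?_⟩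
        · intro i
          have := hbb i
          dsimp only
          by_cases h : i = i₀
          · rw [if_pos h]; omega
          · rw [if_neg h]; omega
        · intro i1 i2 h
          by_contra hne
          have := hsep i1 i2 hne
          dsimp only at h
          by_cases ha : i1 = i₀ <;> by_cases hb : i2 = i₀
          · exact hne (ha.trans hb.symm)
          · rw [if_pos ha, if_neg hb] at h; omega
          · rw [if_neg ha, if_pos hb] at h; omega
          · rw [if_neg ha, if_neg hb] at h; omega
        · intro i1 i2 hne t h1 h2
          have := hsep i1 i2 hne
          rw [hzero, hzero]
          dsimp only
          by_cases ha : i1 = i₀ <;> by_cases hb : i2 = i₀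
          · exact absurd (ha.trans hb.symm) hne
          · rw [if_pos ha, if_neg hb]; omega
          · rw [if_neg ha, if_pos hb]; omega
          · rw [if_neg ha, if_neg hb]; omega
        · right
          refine ⟨i₀, τ, d, ?_, hfd, ?_⟩
          · dsimp only
            rw [if_pos rfl]
            intro s _
            rw [hzero]
            have := hbb i₀
            omega
          · dsimp only
            rw [if_pos rfl]
            rw [cast_shift (base i₀) (x i₀ τ) d, hV]
            decide
      · refine ⟨base, ?_, ?_, ?_, ?_⟩
        · intro i
          have := hbb i
          omega
        · intro i1 i2 h
          by_contra hne
          have := hsep i1 i2 hne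
          omega
        · intro i1 i2 hne t h1 h2
          have := hsep i1 i2 hne
          rw [hzero, hzero]
          omega
        · right
          refine ⟨i₀, τ, d, ?_, hfd, hV⟩
          intro s _
          rw [hzero]
          have := hbb i₀
          omega
    · refine ⟨base, ?_, ?_, ?_, ?_⟩
      · intro i
        have := hbb i
        omega
      · intro i1 i2 h
        by_contra hne
        have := hsep i1 i2 hne
        omega
      · intro i1 i2 hne t h1 h2
        have := hsep i1 i2 hne
        rw [hzero, hzero]
        omega
      · left
        intro i t _
        rcases hflv : fl i t with _ | d
        · rfl
        · exact absurd ⟨i, t, d, hflv⟩ hfe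

end PlacementMain

/-- Three scattered agents in the face-to-face (F2F)
communication model cannot solve Black Hole Search on static rings of arbitrary
size, even when the agents have distinct identifiers: for every F2F algorithm
(one for each known ring size) for three scattered agents with distinct
identifiers there exist a ring size `n > 10`, an initial placement of the three
agents at distinct nodes different from the black hole, and a position of the
black hole on the static oriented ring of size `n`, such that the algorithm fails
to solve BHS there: it is not the case that some agent survives and terminates
correctly locating the black hole while every terminating agent does so
correctly. -/
theorem f2f_three_scattered_agents_impossible :
    ∀ A : (n : ℕ) → FAlgorithm n 3,
      ∃ n : ℕ, 10 < n ∧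
        ∃ (bh : ZMod n) (start : Fin 3 → ZMod n),
          Function.Injective start ∧ (∀ i, start i ≠ bh) ∧
          ¬ ((∃ t i, fHaltedCorrectly bh
                (fRun (A n) bh (staticSchedule n) (fInitConfig (A n) start) t) i) ∧
             (∀ t i, (fRun (A n) bh (staticSchedule n)
                  (fInitConfig (A n) start) t).halted i ≠ none →
               fHaltedCorrectly bh
                 (fRun (A n) bh (staticSchedule n) (fInitConfig (A n) start) t) i)) := by
  intro A
  refine ⟨30, by omega, ?_⟩
  set Algo := A 30 with hAlgo
  have hfr : Freeze (pox Algo) (flagS Algo) := by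
    intro i t d hf u hu
    exact flag_frozen Algo i hf hu
  obtain ⟨p, hC1, hinj, hC2, hC3⟩ :=
    placement (pox Algo) (flagS Algo) (pox_zero Algo) (pox_steps Algo) hfr
  refine ⟨0, fun i => ((p i : ℤ) : ZMod 30), ?_, ?_, ?_⟩
  · intro i1 i2 h
    by_contra hne
    exact BHScast_ne (hC1 i1).1 (hC1 i1).2 (hC1 i2).1 (hC1 i2).2
      (fun he => hne (hinj he)) h
  · intro i
    exact BHScast_ne_zero (hC1 i).1 (hC1 i).2
  · have hsim := sim Algo p hC1 hC2
    have hrun : ∀ t, fRun Algo 0 (staticSchedule 30)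
        (fInitConfig Algo (fun i => ((p i : ℤ) : ZMod 30))) t = runC Algo p t :=
      fun _ => rfl
    rintro ⟨hA, hB⟩
    rcases hC3 with hL | ⟨i, t, d, hal, hfd, hV⟩
    · obtain ⟨t, i, v, dd, hposv, hhalt, _⟩ := hA
      rw [hrun] at hposv hhalt
      by_cases hali : AliveW (p i) (pox Algo i) t
      · have hh := ((hsim t) i).1 hali
        rw [hh.2.2, hL i t hali] at hhalt
        exact nomatch hhalt
      · have hh := ((hsim t) i).2 hali
        rw [hh.1] at hposv
        exact nomatch hposv
    · have hi := ((hsim t) i).1 hal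
      have hhv := hB t i (by
        rw [hrun, hi.2.2, hfd]
        exact fun hc => nomatch hc)
      obtain ⟨v, dd, h1, h2, h3⟩ := hhv
      rw [hrun, hi.1] at h1
      rw [hrun, hi.2.2, hfd] at h2
      have hv : v = ((p i + pox Algo i t : ℤ) : ZMod 30) := (Option.some.inj h1).symm
      have hd : dd = d := (Option.some.inj h2).symm
      rw [hv, hd] at h3
      exact hV h3

end BHS
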